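/- arXiv:2009.13925 — 2 statements merged into one kernel-verified Lean document; each statement's English description precedes it below -/
import Mathlib

section
/- Let (W,∂) be a finite-dimensional cochain complex with adjoint ∂*, D = ∂+∂*, and α, β, γ ≥ 0. Suppose w, v ∈ W satisfy ‖∂w‖² ≤ αγ, ‖∂*v‖² ≤ αγ, and ‖w − v‖² ≤ β. Then ‖w − P^{[0,γ]}w‖² ≤ 3α + 2β and ‖v − P^{[0,γ]}v‖² ≤ 3α + 2β, where P^{[0,γ]} is the spectral projection of D² onto eigenvalues in [0,γ]. -/
open LinearMap Module.End Submodule Set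

open scoped InnerProductSpace

/-!
Let `E` be the range of `P^{[0,γ]}` and `Δ = D² = d d* + d* d`. Since `d` and `d*` commute with
`Δ`, they preserve `E` and `Eᗮ` and commute with the projection onto `Eᗮ`, so
`u = w - P w` and `u' = v - P v` still satisfy `‖d u‖² ≤ αγ`, `‖d* u'‖² ≤ αγ`, `‖u - u'‖² ≤ β`.
On `Eᗮ` the Laplacian is invertible with `γ‖x‖² < re ⟪Δ x, x⟫ = ‖d x‖² + ‖d* x‖²`. Writing
`u = b + a` and `u' = b' + a'` with `b = d d* z`, `a = d* d z` (and similarly with `z'`), the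
coexact part `a` has `d a = d u`, `d* a = 0`, so `‖a‖² ≤ α`; likewise `‖b'‖² ≤ α`. The splitting
is orthogonal, hence `‖b - b'‖² ≤ β`, `‖b‖² ≤ 2α + 2β` and `‖u‖² = ‖b‖² + ‖a‖² ≤ 3α + 2β`.
The bound for `v` is the same statement for the complex `(W, d*)`.
-/

section Spectral

variable {𝕜 V : Type*} [RCLike 𝕜] [NormedAddCommGroup V] [InnerProductSpace 𝕜 V]

/-- For symmetric `T`, the range of the spectral projection `P^S`. -/
def spectralSubspace (T : Module.End 𝕜 V) (S : Set ℝ) : Submodule 𝕜 V :=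
  ⨆ lam ∈ S, eigenspace T (lam : 𝕜)

theorem eigenspace_le_spectralSubspace (T : Module.End 𝕜 V) {S : Set ℝ} {lam : ℝ} (hlam : lam ∈ S) :
    eigenspace T (lam : 𝕜) ≤ spectralSubspace T S :=
  le_iSup₂ (f := fun (lam : ℝ) (_ : lam ∈ S) => eigenspace T (lam : 𝕜)) lam hlam

theorem spectralSubspace_mem_invtSubmodule {T f : Module.End 𝕜 V} (h : Commute T f) (S : Set ℝ) :
    spectralSubspace T S ∈ f.invtSubmodule :=
  (mem_invtSubmodule f).mpr <| iSup₂_le fun _ hlam _ hx =>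
    eigenspace_le_spectralSubspace T hlam (mapsTo_genEigenspace_of_comm h _ 1 hx)

theorem starProjection_orthogonal_apply_comm {U : Submodule 𝕜 V} [U.HasOrthogonalProjection]
    {f : Module.End 𝕜 V} (hU : U ∈ f.invtSubmodule) (hU' : Uᗮ ∈ f.invtSubmodule) (x : V) :
    Uᗮ.starProjection (f x) = f (Uᗮ.starProjection x) :=
  eq_starProjection_of_mem_orthogonal' (hU' (Uᗮ.starProjection_apply_mem x))
    (U.le_orthogonal_orthogonal (hU (U.starProjection_apply_mem x)))
    (by rw [← map_add, starProjection_orthogonal_val, sub_add_cancel])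

theorem norm_apply_starProjection_orthogonal_le {U : Submodule 𝕜 V} [U.HasOrthogonalProjection]
    {f : Module.End 𝕜 V} (hU : U ∈ f.invtSubmodule) (hU' : Uᗮ ∈ f.invtSubmodule) (x : V) :
    ‖f (Uᗮ.starProjection x)‖ ≤ ‖f x‖ :=
  starProjection_orthogonal_apply_comm hU hU' x ▸ Uᗮ.norm_starProjection_apply_le (f x)

variable [FiniteDimensional 𝕜 V]

theorem orthogonal_spectralSubspace_mem_invtSubmodule {T f : Module.End 𝕜 V} (hT : T.IsSymmetric)
    (h : Commute T f) (S : Set ℝ) : (spectralSubspace T S)ᗮ ∈ f.invtSubmodule := by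
  rw [← mem_invtSubmodule_adjoint_iff]
  refine spectralSubspace_mem_invtSubmodule ?_ S
  have := congrArg adjoint h.eq
  simp only [mul_eq_comp, adjoint_comp, hT.adjoint_eq] at this
  exact this.symm

theorem LinearMap.IsPositive.mul_norm_sq_lt_re_inner {T : Module.End 𝕜 V} (hT : T.IsPositive)
    {γ : ℝ} {x : V} (hx : x ∈ (spectralSubspace T (Icc 0 γ))ᗮ) (hx0 : x ≠ 0) :
    γ * ‖x‖ ^ 2 < RCLike.re ⟪T x, x⟫_𝕜 := by
  set K := (spectralSubspace T (Icc 0 γ))ᗮ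
  have hK : ∀ y ∈ K, T y ∈ K :=
    orthogonal_spectralSubspace_mem_invtSubmodule hT.isSymmetric (Commute.refl T) _
  let x' : {y : K // y ≠ 0} := ⟨⟨x, hx⟩, fun h => hx0 (congrArg Subtype.val h)⟩
  have : Nontrivial K := ⟨⟨x', 0, x'.2⟩⟩
  have : Nonempty {y : K // y ≠ 0} := ⟨x'⟩
  set rayleigh := fun y : {y : K // y ≠ 0} => RCLike.re ⟪T.restrict hK y, y⟫_𝕜 / ‖(y : K)‖ ^ 2
  have hrayleigh_nonneg : ∀ y, 0 ≤ rayleigh y := fun y =>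
    div_nonneg (hT.re_inner_nonneg_left _) (sq_nonneg _)
  -- The infimum of the Rayleigh quotient on `K` is an eigenvalue of `T|K`, so it avoids `[0, γ]`.
  set μ := ⨅ y, rayleigh y
  have hμ_nonneg : 0 ≤ μ := le_ciInf hrayleigh_nonneg
  have hγμ : γ < μ := by
    by_contra! hμγ
    refine (hT.isSymmetric.restrict_invariant hK).hasEigenvalue_iInf_of_finiteDimensional
      (eigenspace_restrict_eq_bot hK ?_)
    exact (orthogonal_disjoint _).mono_left
      (eigenspace_le_spectralSubspace T (mem_Icc.mpr ⟨hμ_nonneg, hμγ⟩))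
  have hμx : μ ≤ RCLike.re ⟪T x, x⟫_𝕜 / ‖x‖ ^ 2 :=
    ciInf_le (f := rayleigh) ⟨0, forall_mem_range.mpr hrayleigh_nonneg⟩ x'
  have hx2 : 0 < ‖x‖ ^ 2 := by positivity
  calc γ * ‖x‖ ^ 2 < μ * ‖x‖ ^ 2 := by gcongr
    _ ≤ _ := (le_div_iff₀ hx2).mp hμx

theorem LinearMap.IsPositive.norm_sq_le_of_re_inner_le {T : Module.End 𝕜 V} (hT : T.IsPositive)
    {α γ : ℝ} (hα : 0 ≤ α) (hγ : 0 ≤ γ) {x : V} (hx : x ∈ (spectralSubspace T (Icc 0 γ))ᗮ)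
    (hTx : RCLike.re ⟪T x, x⟫_𝕜 ≤ α * γ) : ‖x‖ ^ 2 ≤ α := by
  rcases eq_or_ne x 0 with rfl | hx0
  · simpa using hα
  · have := hT.mul_norm_sq_lt_re_inner hx hx0
    by_contra! h
    nlinarith [mul_nonneg hγ (sub_nonneg.mpr h.le)]

theorem LinearMap.IsPositive.exists_apply_eq_of_mem_orthogonal {T : Module.End 𝕜 V}
    (hT : T.IsPositive) {γ : ℝ} (hγ : 0 ≤ γ) {u : V} (hu : u ∈ (spectralSubspace T (Icc 0 γ))ᗮ) :
    ∃ z ∈ (spectralSubspace T (Icc 0 γ))ᗮ, T z = u := by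
  have hK : ∀ y ∈ (spectralSubspace T (Icc 0 γ))ᗮ, T y ∈ (spectralSubspace T (Icc 0 γ))ᗮ :=
    orthogonal_spectralSubspace_mem_invtSubmodule hT.isSymmetric (Commute.refl T) _
  have hinj : Function.Injective (T.restrict hK) := by
    refine (injective_iff_map_eq_zero _).mpr fun y hy => ?_
    by_contra hy0
    have := hT.mul_norm_sq_lt_re_inner y.2 (by simpa using hy0)
    rw [show T y = 0 from congrArg Subtype.val hy, inner_zero_left, map_zero] at this
    linarith [mul_nonneg hγ (sq_nonneg ‖(y : V)‖)]
  obtain ⟨z, hz⟩ := injective_iff_surjective.mp hinj ⟨u, hu⟩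
  exact ⟨z, z.2, congrArg Subtype.val hz⟩

end Spectral

section Hodge

variable {𝕜 V : Type*} [RCLike 𝕜] [NormedAddCommGroup V] [InnerProductSpace 𝕜 V]
  [FiniteDimensional 𝕜 V] (d : Module.End 𝕜 V)

noncomputable def hodgeLaplacian : Module.End 𝕜 V := d ∘ₗ adjoint d + adjoint d ∘ₗ d

theorem hodgeLaplacian_adjoint : hodgeLaplacian (adjoint d) = hodgeLaplacian d := by
  rw [hodgeLaplacian, hodgeLaplacian, adjoint_adjoint, add_comm]

theorem re_inner_hodgeLaplacian_self (x : V) :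
    RCLike.re ⟪hodgeLaplacian d x, x⟫_𝕜 = ‖d x‖ ^ 2 + ‖adjoint d x‖ ^ 2 := by
  rw [hodgeLaplacian, LinearMap.add_apply, comp_apply, comp_apply, inner_add_left, map_add,
    adjoint_inner_left, ← adjoint_inner_right d (adjoint d x), inner_self_eq_norm_sq,
    inner_self_eq_norm_sq, add_comm]

theorem isPositive_hodgeLaplacian : (hodgeLaplacian d).IsPositive :=
  (isPositive_self_comp_adjoint d).add (isPositive_adjoint_comp_self d)

variable {d}

theorem adjoint_comp_adjoint_eq_zero (hd : d ∘ₗ d = 0) : adjoint d ∘ₗ adjoint d = 0 := by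
  rw [← adjoint_comp, hd, map_zero]

theorem dirac_comp_dirac (hd : d ∘ₗ d = 0) :
    (d + adjoint d) ∘ₗ (d + adjoint d) = hodgeLaplacian d := by
  rw [hodgeLaplacian, add_comp, comp_add, comp_add, hd, adjoint_comp_adjoint_eq_zero hd,
    zero_add, add_zero]

theorem commute_hodgeLaplacian (hd : d ∘ₗ d = 0) : Commute (hodgeLaplacian d) d := by
  rw [← mul_eq_comp] at hd
  simp only [Commute, SemiconjBy, hodgeLaplacian, ← mul_eq_comp, mul_add, add_mul, ← mul_assoc,
    hd, zero_mul, zero_add]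
  simp only [mul_assoc, hd, mul_zero, add_zero]

theorem commute_hodgeLaplacian_adjoint (hd : d ∘ₗ d = 0) :
    Commute (hodgeLaplacian d) (adjoint d) :=
  hodgeLaplacian_adjoint d ▸ commute_hodgeLaplacian (adjoint_comp_adjoint_eq_zero hd)

theorem norm_apply_add_adjoint_apply_sq (hd : d ∘ₗ d = 0) (x y : V) :
    ‖d x + adjoint d y‖ ^ 2 = ‖d x‖ ^ 2 + ‖adjoint d y‖ ^ 2 := by
  rw [@norm_add_sq 𝕜, adjoint_inner_right, ← comp_apply, hd, LinearMap.zero_apply, inner_zero_left,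
    map_zero, mul_zero, add_zero]

variable {α β γ : ℝ}

theorem norm_sq_le_of_mem_orthogonal_spectralSubspace_hodgeLaplacian (hd : d ∘ₗ d = 0)
    (hα : 0 ≤ α) (hγ : 0 ≤ γ) {u u' : V}
    (hu : u ∈ (spectralSubspace (hodgeLaplacian d) (Icc 0 γ))ᗮ)
    (hu' : u' ∈ (spectralSubspace (hodgeLaplacian d) (Icc 0 γ))ᗮ)
    (hdu : ‖d u‖ ^ 2 ≤ α * γ) (hdu' : ‖adjoint d u'‖ ^ 2 ≤ α * γ) (huu' : ‖u - u'‖ ^ 2 ≤ β) :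
    ‖u‖ ^ 2 ≤ 3 * α + 2 * β := by
  have hΔ := isPositive_hodgeLaplacian d
  have hdK := orthogonal_spectralSubspace_mem_invtSubmodule hΔ.isSymmetric
    (commute_hodgeLaplacian hd) (Icc 0 γ)
  have hd'K := orthogonal_spectralSubspace_mem_invtSubmodule hΔ.isSymmetric
    (commute_hodgeLaplacian_adjoint hd) (Icc 0 γ)
  have hdd : ∀ x, d (d x) = 0 := LinearMap.congr_fun hd
  have hd'd' : ∀ x, adjoint d (adjoint d x) = 0 :=
    LinearMap.congr_fun (adjoint_comp_adjoint_eq_zero hd)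
  obtain ⟨z, hz, rfl⟩ := hΔ.exists_apply_eq_of_mem_orthogonal hγ hu
  obtain ⟨z', hz', rfl⟩ := hΔ.exists_apply_eq_of_mem_orthogonal hγ hu'
  simp only [hodgeLaplacian, LinearMap.add_apply, comp_apply, map_add, hdd, hd'd', zero_add,
    add_zero] at hdu hdu' huu' ⊢
  set a := adjoint d (d z)
  set b := d (adjoint d z)
  set b' := d (adjoint d z')
  have ha : ‖a‖ ^ 2 ≤ α := by
    refine hΔ.norm_sq_le_of_re_inner_le hα hγ (hd'K (hdK hz)) ?_
    simpa [a, re_inner_hodgeLaplacian_self, hdd, hd'd'] using hdu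
  have hb' : ‖b'‖ ^ 2 ≤ α := by
    refine hΔ.norm_sq_le_of_re_inner_le hα hγ (hdK (hd'K hz')) ?_
    simpa [b', re_inner_hodgeLaplacian_self, hdd, hd'd'] using hdu'
  have hbb' : ‖b - b'‖ ^ 2 + ‖a - adjoint d (d z')‖ ^ 2 ≤ β := calc
    _ = ‖d (adjoint d z - adjoint d z') + adjoint d (d z - d z')‖ ^ 2 := by
      rw [norm_apply_add_adjoint_apply_sq hd, map_sub, map_sub]
    _ ≤ β := by
      convert huu' using 3
      simp only [a, b, b', map_sub]
      abel
  have hb : ‖b‖ ^ 2 ≤ 2 * α + 2 * β := calc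
    ‖b‖ ^ 2 ≤ (‖b'‖ + ‖b - b'‖) ^ 2 := by gcongr; exact norm_le_norm_add_norm_sub' b b'
    _ ≤ 2 * (‖b'‖ ^ 2 + ‖b - b'‖ ^ 2) := add_sq_le
    _ ≤ 2 * α + 2 * β := by nlinarith [sq_nonneg ‖a - adjoint d (d z')‖]
  rw [norm_apply_add_adjoint_apply_sq hd]
  linarith

theorem norm_sq_starProjection_orthogonal_spectralSubspace_hodgeLaplacian_le (hd : d ∘ₗ d = 0)
    (hα : 0 ≤ α) (hγ : 0 ≤ γ) {w v : V}
    (hw : ‖d w‖ ^ 2 ≤ α * γ) (hv : ‖adjoint d v‖ ^ 2 ≤ α * γ) (hwv : ‖w - v‖ ^ 2 ≤ β) :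
    ‖(spectralSubspace (hodgeLaplacian d) (Icc 0 γ))ᗮ.starProjection w‖ ^ 2 ≤ 3 * α + 2 * β := by
  set K := spectralSubspace (hodgeLaplacian d) (Icc 0 γ)
  have hΔ := (isPositive_hodgeLaplacian d).isSymmetric
  have hproj : ∀ f, Commute (hodgeLaplacian d) f → ∀ x, ‖f (Kᗮ.starProjection x)‖ ^ 2 ≤ ‖f x‖ ^ 2 :=
    fun f hf x => pow_le_pow_left₀ (norm_nonneg _) (norm_apply_starProjection_orthogonal_le
      (spectralSubspace_mem_invtSubmodule hf _)
      (orthogonal_spectralSubspace_mem_invtSubmodule hΔ hf _) x) 2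
  refine norm_sq_le_of_mem_orthogonal_spectralSubspace_hodgeLaplacian hd hα hγ
    (Kᗮ.starProjection_apply_mem w) (Kᗮ.starProjection_apply_mem v)
    ((hproj d (commute_hodgeLaplacian hd) w).trans hw)
    ((hproj _ (commute_hodgeLaplacian_adjoint hd) v).trans hv) ?_
  rw [← map_sub]
  exact (hproj 1 (Commute.one_right _) (w - v)).trans hwv

end Hodge

theorem stmt4_general {W : Type*} [NormedAddCommGroup W] [InnerProductSpace ℂ W]
    [FiniteDimensional ℂ W] (d : W →ₗ[ℂ] W) (hd : d ∘ₗ d = 0)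
    (α β γ : ℝ) (hα : 0 ≤ α) (hγ : 0 ≤ γ) (w v : W)
    (hw : ‖d w‖ ^ 2 ≤ α * γ) (hv : ‖LinearMap.adjoint d v‖ ^ 2 ≤ α * γ)
    (hwv : ‖w - v‖ ^ 2 ≤ β) :
    let D := d + LinearMap.adjoint d
    ‖w - (Submodule.orthogonalProjectionOnto
        (⨆ lam ∈ Set.Icc (0 : ℝ) γ, Module.End.eigenspace (D ∘ₗ D) (lam : ℂ)) w : W)‖ ^ 2
      ≤ 3 * α + 2 * β ∧
    ‖v - (Submodule.orthogonalProjectionOnto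
        (⨆ lam ∈ Set.Icc (0 : ℝ) γ, Module.End.eigenspace (D ∘ₗ D) (lam : ℂ)) v : W)‖ ^ 2
      ≤ 3 * α + 2 * β := by
  intro D
  have hE : ⨆ lam ∈ Set.Icc (0 : ℝ) γ, Module.End.eigenspace (D ∘ₗ D) (lam : ℂ) =
      spectralSubspace (hodgeLaplacian d) (Icc 0 γ) := by
    rw [dirac_comp_dirac hd]
    rfl
  simp only [hE, coe_orthogonalProjectionOnto_apply, ← starProjection_orthogonal_val]
  refine
    ⟨norm_sq_starProjection_orthogonal_spectralSubspace_hodgeLaplacian_le hd hα hγ hw hv hwv, ?_⟩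
  simpa only [hodgeLaplacian_adjoint] using
    norm_sq_starProjection_orthogonal_spectralSubspace_hodgeLaplacian_le
      (adjoint_comp_adjoint_eq_zero hd) hα hγ hv (by rwa [adjoint_adjoint]) (by rwa [norm_sub_rev])

/-- Refined spectral projection estimate: with `D = d + d*` on a finite-dimensional
complex `(W, d)` (`d² = 0`), if `‖d w‖² ≤ αγ`, `‖d* v‖² ≤ αγ` and `‖w − v‖² ≤ β`,
then `‖w − P^{[0,γ]} w‖² ≤ 3α + 2β` and `‖v − P^{[0,γ]} v‖² ≤ 3α + 2β`, where
`P^{[0,γ]}` is the spectral projection of `D²` onto eigenvalues in `[0, γ]`. -/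
theorem stmt4 {W : Type*} [NormedAddCommGroup W] [InnerProductSpace ℂ W]
    [FiniteDimensional ℂ W] (d : W →ₗ[ℂ] W) (hd : d ∘ₗ d = 0)
    (α β γ : ℝ) (hα : 0 ≤ α) (hβ : 0 ≤ β) (hγ : 0 ≤ γ) (w v : W)
    (hw : ‖d w‖ ^ 2 ≤ α * γ) (hv : ‖LinearMap.adjoint d v‖ ^ 2 ≤ α * γ)
    (hwv : ‖w - v‖ ^ 2 ≤ β) :
    let D := d + LinearMap.adjoint d
    ‖w - (Submodule.orthogonalProjectionOnto
        (⨆ lam ∈ Set.Icc (0 : ℝ) γ, Module.End.eigenspace (D ∘ₗ D) (lam : ℂ)) w : W)‖ ^ 2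
      ≤ 3 * α + 2 * β ∧
    ‖v - (Submodule.orthogonalProjectionOnto
        (⨆ lam ∈ Set.Icc (0 : ℝ) γ, Module.End.eigenspace (D ∘ₗ D) (lam : ℂ)) v : W)‖ ^ 2
      ≤ 3 * α + 2 * β :=
  stmt4_general d hd α β γ hα hγ w v hw hv hwv
end

section
/- On Ω•([−1,1],V) with the self-adjoint realization D of the de Rham operator d + d* for the boundary condition ω(−1) ∈ V₁ ⊕ V₁^⊥ du, ω(1) ∈ V₂ ⊕ V₂^⊥ du, the kernel of D² on 0-forms equals the constants in V₁ ∩ V₂, and the kernel on 1-forms equals the constant one-forms with values in (V₁^⊥ ∩ V₂^⊥) du. Consequently Ker D² is naturally isomorphic to H⁰ ⊕ H¹ = (V₁∩V₂) ⊕ V/(V₁+V₂). -/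
open Set

private lemma deriv_eq_zero_of_constOn {V : Type*} [NormedAddCommGroup V] [NormedSpace ℝ V]
    {f : ℝ → V} (hf : Differentiable ℝ f) {v : V}
    (hconst : ∀ x ∈ Set.Icc (-1 : ℝ) 1, f x = v) :
    ∀ x ∈ Set.Icc (-1 : ℝ) 1, deriv f x = 0 := by
  intro x hx
  have hu : UniqueDiffWithinAt ℝ (Set.Icc (-1 : ℝ) 1) x :=
    (uniqueDiffOn_Icc (by norm_num)) x hx
  have h1 : derivWithin f (Set.Icc (-1 : ℝ) 1) x = deriv f x := (hf x).derivWithin hu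
  have h2 : derivWithin f (Set.Icc (-1 : ℝ) 1) x
      = derivWithin (fun _ => v) (Set.Icc (-1 : ℝ) 1) x :=
    derivWithin_congr (fun y hy => hconst y hy) (hconst x hx)
  rw [← h1, h2]; simp

private lemma constOn_of_deriv_eq_zero {V : Type*} [NormedAddCommGroup V] [NormedSpace ℝ V]
    {f : ℝ → V} (hf : Differentiable ℝ f)
    (h : ∀ x ∈ Set.Icc (-1 : ℝ) 1, deriv f x = 0) :
    ∀ x ∈ Set.Icc (-1 : ℝ) 1, f x = f (-1) := by
  apply constant_of_derivWithin_zero hf.differentiableOn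
  intro x hx
  have hx' : x ∈ Set.Icc (-1 : ℝ) 1 := Set.mem_Icc_of_Ico hx
  rw [(hf x).derivWithin ((uniqueDiffOn_Icc (by norm_num)) x hx')]
  exact h x hx'

private lemma key_lemma {V : Type*} [NormedAddCommGroup V] [InnerProductSpace ℂ V]
    (W₁ W₂ U₁ U₂ : Submodule ℂ V)
    (h₁ : ∀ w ∈ U₁, ∀ v ∈ W₁, (inner ℂ w v : ℂ) = 0)
    (h₂ : ∀ w ∈ U₂, ∀ v ∈ W₂, (inner ℂ w v : ℂ) = 0)
    (f : ℝ → V) (hf : ContDiff ℝ (⊤ : ℕ∞) f) :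
    ((∀ x ∈ Set.Icc (-1 : ℝ) 1, deriv (deriv f) x = 0) ∧
        f (-1) ∈ W₁ ∧ f 1 ∈ W₂ ∧ deriv f (-1) ∈ U₁ ∧ deriv f 1 ∈ U₂) ↔
      ∃ v ∈ W₁ ⊓ W₂, ∀ x ∈ Set.Icc (-1 : ℝ) 1, f x = v := by
  have hdf : Differentiable ℝ f := hf.differentiable (by simp)
  have hf' : ContDiff ℝ ((⊤ : ℕ∞) : WithTop ℕ∞) f := hf.of_le (by simp)
  have hdg : Differentiable ℝ (deriv f) :=
    (contDiff_infty_iff_deriv.mp hf').2.differentiable (by simp)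
  have hm1 : (-1 : ℝ) ∈ Set.Icc (-1 : ℝ) 1 := by norm_num
  have hp1 : (1 : ℝ) ∈ Set.Icc (-1 : ℝ) 1 := by norm_num
  constructor
  · rintro ⟨hdd, hfm, hfp, hdm, hdp⟩
    -- deriv f is constant c on the interval
    have hgc : ∀ x ∈ Set.Icc (-1 : ℝ) 1, deriv f x = deriv f (-1) :=
      constOn_of_deriv_eq_zero hdg hdd
    set c := deriv f (-1) with hc
    -- f x = f (-1) + c + x • c on the interval
    have hdh : Differentiable ℝ (fun x : ℝ => f x - x • c) :=
      hdf.sub (differentiable_id.smul_const c)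
    have hderivh : ∀ x ∈ Set.Icc (-1 : ℝ) 1, deriv (fun x : ℝ => f x - x • c) x = 0 := by
      intro x hx
      have hs : HasDerivAt (fun x : ℝ => f x - x • c) (deriv f x - (1 : ℝ) • c) x :=
        (hdf x).hasDerivAt.sub ((hasDerivAt_id x).smul_const c)
      rw [hs.deriv, hgc x hx]
      module
    have hhconst := constOn_of_deriv_eq_zero hdh hderivh
    have hfx : ∀ x ∈ Set.Icc (-1 : ℝ) 1, f x = f (-1) + c + x • c := by
      intro x hx
      have h := hhconst x hx
      rw [sub_eq_iff_eq_add] at h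
      rw [h]; module
    -- boundary conditions force c = 0
    have hc2 : f 1 = f (-1) + c + c := by simpa using hfx 1 hp1
    have hz1 : (inner ℂ c (f (-1)) : ℂ) = 0 := h₁ c hdm (f (-1)) hfm
    have hcp : c = deriv f 1 := (hgc 1 hp1).symm
    have hz2 : (inner ℂ c (f 1) : ℂ) = 0 := by rw [hcp]; exact h₂ _ hdp (f 1) hfp
    have hcc : (inner ℂ c c : ℂ) = 0 := by
      rw [hc2, inner_add_right, inner_add_right, hz1] at hz2
      have : (2: ℂ) * inner ℂ c c = 0 := by rw [two_mul]; linear_combination hz2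
      simpa using this
    have hc0 : c = 0 := inner_self_eq_zero.mp hcc
    refine ⟨f (-1), ⟨hfm, ?_⟩, fun x hx => by simpa [hc0] using hfx x hx⟩
    have : f 1 = f (-1) := by simp [hc2, hc0]
    rwa [this] at hfp
  · rintro ⟨v, ⟨hv1, hv2⟩, hconst⟩
    have hd0 : ∀ x ∈ Set.Icc (-1 : ℝ) 1, deriv f x = 0 :=
      deriv_eq_zero_of_constOn hdf hconst
    have hdd0 : ∀ x ∈ Set.Icc (-1 : ℝ) 1, deriv (deriv f) x = 0 :=
      deriv_eq_zero_of_constOn hdg hd0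
    refine ⟨hdd0, ?_, ?_, ?_, ?_⟩
    · rw [hconst (-1) hm1]; exact hv1
    · rw [hconst 1 hp1]; exact hv2
    · rw [hd0 (-1) hm1]; exact U₁.zero_mem
    · rw [hd0 1 hp1]; exact U₂.zero_mem

/-- Kernel of `D²` on `Ω•([−1,1],V)` with the absolute-type self-adjoint boundary
conditions `ω(−1) ∈ V₁ ⊕ V₁^⊥ du`, `ω(1) ∈ V₂ ⊕ V₂^⊥ du`: on `0`-forms the kernel
consists of the constants with value in `V₁ ∩ V₂`; on `1`-forms (coefficient
functions of `du`) it consists of the constants in `V₁^⊥ ∩ V₂^⊥`; consequently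
`Ker D² ≅ (V₁ ∩ V₂) ⊕ V/(V₁ + V₂)` since `V₁^⊥ ∩ V₂^⊥ ≅ V/(V₁+V₂)`. -/
theorem stmt10 {V : Type*} [NormedAddCommGroup V] [InnerProductSpace ℂ V]
    [FiniteDimensional ℂ V] (V₁ V₂ : Submodule ℂ V) :
    -- kernel of D² on 0-forms
    (∀ f : ℝ → V, ContDiff ℝ (⊤ : ℕ∞) f →
      (((∀ x ∈ Set.Icc (-1 : ℝ) 1, deriv (deriv f) x = 0) ∧
          f (-1) ∈ V₁ ∧ f 1 ∈ V₂ ∧ deriv f (-1) ∈ V₁ᗮ ∧ deriv f 1 ∈ V₂ᗮ) ↔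
        ∃ v ∈ V₁ ⊓ V₂, ∀ x ∈ Set.Icc (-1 : ℝ) 1, f x = v)) ∧
    -- kernel of D² on 1-forms (g is the coefficient of du)
    (∀ g : ℝ → V, ContDiff ℝ (⊤ : ℕ∞) g →
      (((∀ x ∈ Set.Icc (-1 : ℝ) 1, deriv (deriv g) x = 0) ∧
          g (-1) ∈ V₁ᗮ ∧ g 1 ∈ V₂ᗮ ∧ deriv g (-1) ∈ V₁ ∧ deriv g 1 ∈ V₂) ↔
        ∃ v ∈ V₁ᗮ ⊓ V₂ᗮ, ∀ x ∈ Set.Icc (-1 : ℝ) 1, g x = v)) ∧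
    -- identification of the degree-one part with V/(V₁+V₂)
    Nonempty (↥(V₁ᗮ ⊓ V₂ᗮ) ≃ₗ[ℂ] (V ⧸ (V₁ ⊔ V₂))) := by
  refine ⟨?_, ?_, ?_⟩
  · intro f hf
    exact key_lemma V₁ V₂ V₁ᗮ V₂ᗮ
      (fun w hw v hv => (Submodule.mem_orthogonal' V₁ w).mp hw v hv)
      (fun w hw v hv => (Submodule.mem_orthogonal' V₂ w).mp hw v hv) f hf
  · intro g hg
    exact key_lemma V₁ᗮ V₂ᗮ V₁ V₂
      (fun w hw v hv => (Submodule.mem_orthogonal V₁ v).mp hv w hw)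
      (fun w hw v hv => (Submodule.mem_orthogonal V₂ v).mp hv w hw) g hg
  · have h : V₁ᗮ ⊓ V₂ᗮ = (V₁ ⊔ V₂)ᗮ := Submodule.inf_orthogonal V₁ V₂
    exact ⟨(LinearEquiv.ofEq _ _ h).trans
      ((Submodule.quotientEquivOfIsCompl (V₁ ⊔ V₂) (V₁ ⊔ V₂)ᗮ
        Submodule.isCompl_orthogonal_of_hasOrthogonalProjection).symm)⟩
end
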